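/- arXiv:1806.11180 — 5 statements merged into one kernel-verified Lean document; each statement's English description precedes it below -/
import Mathlib

section
/- Let r be a well-founded binary relation on a type X, and let X also carry a linear order ≤X whose strict order <X is well-founded. Then the Kleene–Brouwer order <KB on the r-descending lists over X is a strict linear order and is well-founded. -/
/-- A list `[a₀, a₁, …, aₙ]` is `r`-descending if each entry is `r`-below the
previous one, i.e. `r aᵢ₊₁ aᵢ` for each `i < n`. -/
def IsDescending {X : Type*} (r : X → X → Prop) (l : List X) : Prop :=
  List.Chain' (fun a b => r b a) l

/-- The Kleene–Brouwer order on lists over a linear order `X`: `s <KB t` iff `t`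
is a proper initial segment (prefix) of `s`, or at the first place `i` where they
differ (with `i` less than both lengths) the entry of `s` is below that of `t`. -/
def KBLt {X : Type*} [LinearOrder X] (s t : List X) : Prop :=
  (t <+: s ∧ t ≠ s) ∨
    ∃ (i : ℕ) (hs : i < s.length) (ht : i < t.length),
      (∀ j : ℕ, j < i → s[j]? = t[j]?) ∧ s.get ⟨i, hs⟩ < t.get ⟨i, ht⟩

/-! `s <KB t` is the lexicographic order `List.Lex (· > ·) t s`, in which the end of a list acts
as a top element; hence it is a strict total order.

A descending list KB-below a nonempty descending `b :: l` is either `c :: s` with `c < b`, or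
`b :: s` with `s <KB l`, and then the head of `s` is `r`-below `b`. So induction along `<` on the
head, then along KB on the tail, shows: KB is well-founded on the descending lists with head in
`p` as soon as it is on those with head `r`-below `b`, for each `b` in `p`. Induction along `r`
then gives well-foundedness for `p = (r · b)`, hence for all descending lists. -/

section KleeneBrouwer

variable {X : Type*}

theorem isDescending_cons_iff {r : X → X → Prop} {b : X} {l : List X} :
    IsDescending r (b :: l) ↔ IsDescending r l ∧ ∀ a ∈ l.head?, r a b :=
  List.isChain_cons.trans and_comm

variable [LinearOrder X]

theorem not_kbLt_nil (t : List X) : ¬ KBLt [] t := by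
  rintro (⟨hp, hne⟩ | ⟨i, hs, -⟩)
  · exact hne (List.prefix_nil.mp hp)
  · simp at hs

theorem cons_kbLt_nil (a : X) (s : List X) : KBLt (a :: s) [] :=
  Or.inl ⟨List.nil_prefix, List.cons_ne_nil a s |>.symm⟩

theorem cons_kbLt_cons_iff {a b : X} {s t : List X} :
    KBLt (a :: s) (b :: t) ↔ a < b ∨ a = b ∧ KBLt s t := by
  constructor
  · rintro (⟨hp, hne⟩ | ⟨i, hs, ht, hagree, hlt⟩)
    · obtain ⟨rfl, hts⟩ := List.cons_prefix_cons.mp hp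
      exact Or.inr ⟨rfl, Or.inl ⟨hts, by simpa using hne⟩⟩
    · cases i with
      | zero => exact Or.inl (by simpa using hlt)
      | succ i =>
        refine Or.inr ⟨by simpa using hagree 0 i.succ_pos, Or.inr ⟨i, by simpa using hs,
          by simpa using ht, fun j hj => hagree (j + 1) (by omega), by simpa using hlt⟩⟩
  · rintro (hab | ⟨rfl, ⟨hp, hne⟩ | ⟨i, hs, ht, hagree, hlt⟩⟩)
    · exact Or.inr ⟨0, by simp, by simp, by simp, by simpa using hab⟩
    · exact Or.inl ⟨List.cons_prefix_cons.mpr ⟨rfl, hp⟩, by simpa using hne⟩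
    · refine Or.inr ⟨i + 1, by simpa using hs, by simpa using ht, ?_, by simpa using hlt⟩
      rintro (_ | j) hj
      exacts [rfl, hagree j (by omega)]

theorem kbLt_iff_lex_gt {s t : List X} : KBLt s t ↔ List.Lex (· > ·) t s := by
  induction s generalizing t with
  | nil => simp [not_kbLt_nil]
  | cons a s ih =>
    cases t with
    | nil => simp [cons_kbLt_nil]
    | cons b t => simp [cons_kbLt_cons_iff, List.cons_lex_cons_iff, ih, eq_comm]

instance : IsStrictTotalOrder (List X) KBLt := by
  have : IsStrictTotalOrder (List X) (List.Lex (· > ·)) :=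
    { isStrictWeakOrder_of_isOrderConnected with }
  have hKB : (KBLt : List X → List X → Prop) = Function.swap (List.Lex (· > ·)) := by
    ext s t
    exact kbLt_iff_lex_gt
  exact hKB ▸ inferInstance

-- Only the smaller side is restricted: accessibility of every list under `DescKBLt r p` amounts to
-- well-foundedness of KB on the descending lists with head in `p`.
def DescKBLt (r : X → X → Prop) (p : X → Prop) (s t : List X) : Prop :=
  (IsDescending r s ∧ ∀ a ∈ s.head?, p a) ∧ KBLt s t

variable {r : X → X → Prop} {p : X → Prop}

theorem wellFounded_descKBLt_of_forall (hX : WellFounded ((· < ·) : X → X → Prop))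
    (h : ∀ b, p b → WellFounded (DescKBLt r (r · b))) : WellFounded (DescKBLt r p) := by
  have acc_cons (b : X) (hb : p b) (l : List X) (hl : IsDescending r (b :: l)) :
      Acc (DescKBLt r p) (b :: l) := by
    induction b using hX.induction generalizing l with
    | _ b ihHead =>
      induction l using (h b hb).induction with
      | _ l ihTail =>
        refine ⟨_, ?_⟩
        rintro (_ | ⟨c, s⟩) ⟨⟨hs, hsp⟩, hlt⟩
        · exact absurd hlt (not_kbLt_nil _)
        rcases cons_kbLt_cons_iff.mp hlt with hcb | ⟨rfl, hsl⟩
        · exact ihHead c hcb (hsp c rfl) s hs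
        · exact ihTail s ⟨isDescending_cons_iff.mp hs, hsl⟩ hs
  refine ⟨fun t => ⟨_, ?_⟩⟩
  rintro (_ | ⟨c, s⟩) ⟨⟨hs, hsp⟩, hlt⟩
  · exact absurd hlt (not_kbLt_nil _)
  · exact acc_cons c (hsp c rfl) s hs

theorem wellFounded_descKBLt_below (hX : WellFounded ((· < ·) : X → X → Prop))
    (hr : WellFounded r) (b : X) : WellFounded (DescKBLt r (r · b)) := by
  induction b using hr.induction with
  | _ b ih => exact wellFounded_descKBLt_of_forall hX ih

end KleeneBrouwer

/-- If `r` is a well-founded relation on `X` and `X` carries a linear order whose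
strict order is well-founded, then the Kleene–Brouwer order on the `r`-descending
lists over `X` is a strict linear order and is well-founded. -/
theorem kleeneBrouwer_isStrictTotalOrder_and_wellFounded {X : Type*} [LinearOrder X]
    (hX : WellFounded ((· < ·) : X → X → Prop))
    (r : X → X → Prop) (hr : WellFounded r) :
    IsStrictTotalOrder {l : List X // IsDescending r l}
      (fun s t => KBLt s.1 t.1) ∧
    WellFounded (fun s t : {l : List X // IsDescending r l} => KBLt s.1 t.1) := by
  refine ⟨(Subtype.relEmbedding KBLt (IsDescending r)).isStrictTotalOrder, ?_⟩
  have hwf : WellFounded (DescKBLt r fun _ => True) :=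
    wellFounded_descKBLt_of_forall hX fun b _ => wellFounded_descKBLt_below hX hr b
  exact Subrelation.wf (fun {s _} h => ⟨⟨s.2, fun _ _ => trivial⟩, h⟩)
    (InvImage.wf Subtype.val hwf)
end

section
/- Let r be a well-founded binary relation on a type X, and let X also carry a linear order ≤X whose strict order <X is well-founded. For each a ∈ X, the collection of r-descending lists whose last entry is a is nonempty and has a <KB-least element π(a) in the Kleene–Brouwer order. The resulting map π is a ranking of r: if r b a then π(b) <KB π(a). -/
open Relation

section KleeneBrouwer

variable {X : Type*} [LinearOrder X]

def KBLe (s t : List X) : Prop :=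
  s = t ∨ KBLt s t

theorem kbLt_cons_of_lt {s t : List X} {x y : X} (h : x < y) : KBLt (x :: s) (y :: t) :=
  Or.inr ⟨0, by simp, by simp, fun _ hj => absurd hj (Nat.not_lt_zero _), by simpa⟩

theorem KBLt.cons {s t : List X} (c : X) (h : KBLt s t) : KBLt (c :: s) (c :: t) := by
  rcases h with ⟨hpre, hne⟩ | ⟨i, hs, ht, hagree, hlt⟩
  · exact Or.inl ⟨List.cons_prefix_cons.mpr ⟨rfl, hpre⟩, by simpa using hne⟩
  · refine Or.inr ⟨i + 1, by simpa using hs, by simpa using ht, fun j hj => ?_, by simpa using hlt⟩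
    cases j with
    | zero => rfl
    | succ j => simpa using hagree j (by omega)

theorem KBLe.cons {s t : List X} (c : X) (h : KBLe s t) : KBLe (c :: s) (c :: t) :=
  h.imp (congrArg _) (KBLt.cons c)

theorem kbLe_cons_of_le {f : X → List X} {t : List X} {m h : X} (hmh : m ≤ h)
    (hf : KBLe (f h) t) : KBLe (m :: f m) (h :: t) := by
  rcases hmh.lt_or_eq with hlt | rfl
  · exact Or.inr (kbLt_cons_of_lt hlt)
  · exact hf.cons m

theorem kbLt_of_kbLe_concat {s t : List X} {x : X} (h : KBLe s (t ++ [x])) (hne : s ≠ t) :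
    KBLt s t := by
  rcases h with rfl | ⟨hpre, -⟩ | ⟨i, hs, ht, hagree, hlt⟩
  · exact Or.inl ⟨List.prefix_append t [x], by simp⟩
  · exact Or.inl ⟨(List.prefix_append t [x]).trans hpre, Ne.symm hne⟩
  · rcases lt_or_ge i t.length with hi | hi
    · refine Or.inr ⟨i, hs, hi, fun j hj => ?_, ?_⟩
      · rw [hagree j hj, List.getElem?_append_left (hj.trans hi)]
      · simpa [List.getElem_append_left hi] using hlt
    -- `s` and `t ++ [x]` first differ at `i = t.length`, so `t` is a prefix of `s`.
    · refine Or.inl ⟨List.prefix_iff_getElem?.mpr fun j hj => ?_, Ne.symm hne⟩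
      rw [hagree j (by omega), List.getElem?_append_left hj, List.getElem?_eq_getElem hj]

end KleeneBrouwer

section GreedyDescent

variable {X : Type*} (r : X → X → Prop)

def DescendsTo (a : X) (l : List X) : Prop :=
  IsDescending r l ∧ l.getLast? = some a

variable {r}

theorem DescendsTo.reflTransGen {a h : X} {t : List X} (hl : DescendsTo r a (h :: t)) :
    ReflTransGen r a h :=
  (List.relationReflTransGen_of_exists_isChain_cons t hl.1
    (by simpa [List.getLast?_eq_some_getLast] using hl.2)).swap

theorem DescendsTo.of_cons_cons {a c h : X} {t : List X} (hl : DescendsTo r a (c :: h :: t)) :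
    r h c ∧ DescendsTo r a (h :: t) :=
  have hd := List.isChain_cons_cons.mp hl.1
  ⟨hd.1, hd.2, by simpa using hl.2⟩

theorem DescendsTo.concat {l : List X} {a b : X} (hl : DescendsTo r a l) (hba : r b a) :
    DescendsTo r b (l ++ [b]) := by
  refine ⟨hl.1.append (List.isChain_singleton b) fun x hx y hy => ?_, List.getLast?_concat⟩
  rw [hl.2, Option.mem_some_iff] at hx
  rw [List.head?_singleton, Option.mem_some_iff] at hy
  exact hx ▸ hy ▸ hba

variable [LinearOrder X] (r) (hX : WellFounded ((· < ·) : X → X → Prop)) (hr : WellFounded r)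
  (a : X)

noncomputable def greedyDescent : X → List X :=
  open Classical in
  hr.fix fun c descend =>
    if h : {x | r x c ∧ ReflTransGen r a x}.Nonempty then
      hX.min _ h :: descend (hX.min _ h) (hX.min_mem _ h).1
    else []

noncomputable def leastDescentTo : List X :=
  hX.min {x | ReflTransGen r a x} ⟨a, .refl⟩ ::
    greedyDescent r hX hr a (hX.min {x | ReflTransGen r a x} ⟨a, .refl⟩)

variable {r hX hr a}

theorem greedyDescent_of_nonempty {c : X} (h : {x | r x c ∧ ReflTransGen r a x}.Nonempty) :
    greedyDescent r hX hr a c = hX.min _ h :: greedyDescent r hX hr a (hX.min _ h) := by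
  rw [greedyDescent, hr.fix_eq, dif_pos h]

theorem greedyDescent_of_not_nonempty {c : X} (h : ¬{x | r x c ∧ ReflTransGen r a x}.Nonempty) :
    greedyDescent r hX hr a c = [] := by
  rw [greedyDescent, hr.fix_eq, dif_neg h]

theorem greedyDescent_self : greedyDescent r hX hr a a = [] :=
  greedyDescent_of_not_nonempty fun ⟨_, hxa, hax⟩ =>
    hr.transGen.irrefl.irrefl a (TransGen.tail' hax hxa)

theorem descendsTo_cons_greedyDescent {c : X} (hc : ReflTransGen r a c) :
    DescendsTo r a (c :: greedyDescent r hX hr a c) := by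
  induction c using hr.induction with
  | _ c ih =>
    by_cases h : {x | r x c ∧ ReflTransGen r a x}.Nonempty
    · obtain ⟨hmc, ham⟩ := hX.min_mem _ h
      obtain ⟨hd, hl⟩ := ih _ hmc ham
      rw [greedyDescent_of_nonempty h]
      exact ⟨List.isChain_cons_cons.mpr ⟨hmc, hd⟩, by rwa [List.getLast?_cons_cons]⟩
    · obtain rfl : c = a := by
        rcases hc.cases_tail with rfl | ⟨x, hax, hxc⟩
        · rfl
        · exact absurd ⟨x, hxc, hax⟩ h
      rw [greedyDescent_self]
      exact ⟨List.isChain_singleton c, rfl⟩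

theorem greedyDescent_kbLe {c : X} {t : List X} (hl : DescendsTo r a (c :: t)) :
    KBLe (greedyDescent r hX hr a c) t := by
  induction c using hr.induction generalizing t with
  | _ c ih =>
    cases t with
    | nil =>
      obtain rfl : c = a := by simpa using hl.2
      exact Or.inl greedyDescent_self
    | cons h t =>
      obtain ⟨hhc, hl⟩ := hl.of_cons_cons
      have hh : h ∈ {x | r x c ∧ ReflTransGen r a x} := ⟨hhc, hl.reflTransGen⟩
      rw [greedyDescent_of_nonempty ⟨h, hh⟩]
      exact kbLe_cons_of_le (hX.min_le hh) (ih h hhc hl)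

theorem descendsTo_leastDescentTo : DescendsTo r a (leastDescentTo r hX hr a) :=
  descendsTo_cons_greedyDescent (hX.min_mem _ _)

theorem leastDescentTo_kbLe {l : List X} (hl : DescendsTo r a l) :
    KBLe (leastDescentTo r hX hr a) l := by
  cases l with
  | nil => simp [DescendsTo] at hl
  | cons h t =>
    exact kbLe_cons_of_le (hX.min_le hl.reflTransGen) (greedyDescent_kbLe hl)

theorem kbLt_leastDescentTo_of_rel {a b : X} (hba : r b a) :
    KBLt (leastDescentTo r hX hr b) (leastDescentTo r hX hr a) := by
  have ha : DescendsTo r a (leastDescentTo r hX hr a) := descendsTo_leastDescentTo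
  have hb : DescendsTo r b (leastDescentTo r hX hr b) := descendsTo_leastDescentTo
  have hne : leastDescentTo r hX hr b ≠ leastDescentTo r hX hr a := fun e => by
    have hab : some b = some a := by rw [← hb.2, ← ha.2, e]
    exact hr.irrefl.irrefl a (Option.some_inj.mp hab ▸ hba)
  exact kbLt_of_kbLe_concat (leastDescentTo_kbLe (ha.concat hba)) hne

end GreedyDescent

/-- For each `a ∈ X`, the collection of `r`-descending lists ending with `a` is
nonempty and has a `<KB`-least element `π a`;  the resulting map `π` is a ranking
of `r`: if `r b a` then `π b <KB π a`. -/
theorem kleeneBrouwer_least_descending_list_ranking {X : Type*} [LinearOrder X]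
    (hX : WellFounded ((· < ·) : X → X → Prop))
    (r : X → X → Prop) (hr : WellFounded r) :
    (∀ a : X, ∃ l : List X, IsDescending r l ∧ l.getLast? = some a) ∧
    ∃ π : X → List X,
      (∀ a : X, IsDescending r (π a) ∧ (π a).getLast? = some a ∧
        ∀ l : List X, IsDescending r l → l.getLast? = some a →
          π a = l ∨ KBLt (π a) l) ∧
      ∀ a b : X, r b a → KBLt (π b) (π a) :=
  ⟨fun a => ⟨[a], List.isChain_singleton a, rfl⟩, leastDescentTo r hX hr,
    fun _ => ⟨descendsTo_leastDescentTo.1, descendsTo_leastDescentTo.2,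
      fun _ hd hl => leastDescentTo_kbLe ⟨hd, hl⟩⟩,
    fun _ _ => kbLt_leastDescentTo_of_rel⟩
end

section
/- Let X be a type with the discrete topology and give ℕ → X the product topology, and let A ⊆ (ℕ → X). Then A is clopen if and only if the one-step-extension relation on undecided positions is well-founded: the relation on List X given by 't is related below s iff t = s ++ [x] for some x ∈ X and both s and t are undecided for A' is a well-founded relation. That is, a game is clopen exactly when its game tree of undecided positions is well-founded. -/
/-!
A set `A ⊆ ℕ → X` and its complement are both open exactly when every sequence `f` has a
prefix that is decided for `A`, since the cylinders around `f` form a neighbourhood basis.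
Undecided positions are closed under taking prefixes, so an infinite descending chain in the
tree of undecided positions is the same thing as a sequence all of whose prefixes are undecided.
-/

/-- A sequence `f : ℕ → X` extends a finite position `s = [a₀, …, a_{n−1}]`
if `f i = aᵢ` for all `i < n`. -/
def ExtendsPos {X : Type*} (f : ℕ → X) (s : List X) : Prop :=
  ∀ (i : ℕ) (h : i < s.length), f i = s.get ⟨i, h⟩

/-- A position `s` is undecided for `A` if some extension of `s` lies in `A`
and some extension of `s` lies outside `A`. -/
def Undecided {X : Type*} (A : Set (ℕ → X)) (s : List X) : Prop :=
  (∃ f : ℕ → X, ExtendsPos f s ∧ f ∈ A) ∧ (∃ f : ℕ → X, ExtendsPos f s ∧ f ∉ A)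

open PiNat

section

variable {X : Type*}

def seqPrefix (f : ℕ → X) (n : ℕ) : List X :=
  List.ofFn fun i : Fin n => f i

theorem seqPrefix_succ (f : ℕ → X) (n : ℕ) :
    seqPrefix f (n + 1) = seqPrefix f n ++ [f n] := by
  rw [seqPrefix, List.ofFn_succ', List.concat_eq_append]
  rfl

theorem extendsPos_seqPrefix_iff {f g : ℕ → X} {n : ℕ} :
    ExtendsPos g (seqPrefix f n) ↔ g ∈ cylinder f n := by
  simp [ExtendsPos, seqPrefix, mem_cylinder_iff]

theorem exists_extendsPos_of_prefix_chain {s : ℕ → List X} (hs : ∀ n, s n <+: s (n + 1))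
    (hlen : ∀ n, n ≤ (s n).length) : ∃ F : ℕ → X, ∀ n, ExtendsPos F (s n) := by
  have hmono := Nat.rel_of_forall_rel_succ_of_le (· <+: ·) hs
  refine ⟨fun i => (s (i + 1))[i]'(hlen (i + 1)), fun n i hi => ?_⟩
  rw [List.get_eq_getElem, (hmono (le_max_left n (i + 1))).getElem hi]
  exact (hmono (le_max_right n (i + 1))).getElem _

section Undecided

variable {A : Set (ℕ → X)}

theorem Undecided.mono {s t : List X} (h : ∀ g, ExtendsPos g t → ExtendsPos g s)
    (ht : Undecided A t) : Undecided A s :=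
  ⟨ht.1.imp fun g hg => ⟨h g hg.1, hg.2⟩, ht.2.imp fun g hg => ⟨h g hg.1, hg.2⟩⟩

theorem undecided_compl {s : List X} : Undecided Aᶜ s ↔ Undecided A s := by
  simp only [Undecided, Set.mem_compl_iff, not_not]
  exact and_comm

theorem undecided_seqPrefix_iff {f : ℕ → X} {n : ℕ} :
    Undecided A (seqPrefix f n) ↔
      (cylinder f n ∩ A).Nonempty ∧ (cylinder f n \ A).Nonempty := by
  simp only [Undecided, extendsPos_seqPrefix_iff]
  rfl

theorem not_undecided_seqPrefix_iff_of_mem {f : ℕ → X} (hf : f ∈ A) {n : ℕ} :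
    ¬Undecided A (seqPrefix f n) ↔ cylinder f n ⊆ A := by
  have hinter : (cylinder f n ∩ A).Nonempty := ⟨f, self_mem_cylinder f n, hf⟩
  rw [undecided_seqPrefix_iff, ← Set.sdiff_eq_empty]
  simp [hinter, Set.not_nonempty_iff_eq_empty]

end Undecided

theorem isOpen_iff_forall_exists_cylinder_subset {E : ℕ → Type*} [∀ n, TopologicalSpace (E n)]
    [∀ n, DiscreteTopology (E n)] {U : Set (∀ n, E n)} :
    IsOpen U ↔ ∀ x ∈ U, ∃ n, cylinder x n ⊆ U := by
  rw [(isTopologicalBasis_cylinders E).isOpen_iff]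
  refine forall₂_congr fun x _ =>
    ⟨?_, fun ⟨n, hn⟩ => ⟨_, ⟨x, n, rfl⟩, self_mem_cylinder x n, hn⟩⟩
  rintro ⟨_, ⟨y, n, rfl⟩, hxy, hsub⟩
  exact ⟨n, mem_cylinder_iff_eq.1 hxy ▸ hsub⟩

section Topology

variable [TopologicalSpace X] [DiscreteTopology X] {A : Set (ℕ → X)}

theorem isOpen_iff_forall_mem_exists_not_undecided :
    IsOpen A ↔ ∀ f ∈ A, ∃ n, ¬Undecided A (seqPrefix f n) := by
  rw [isOpen_iff_forall_exists_cylinder_subset]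
  exact forall₂_congr fun f hf =>
    exists_congr fun n => (not_undecided_seqPrefix_iff_of_mem hf).symm

theorem isClopen_iff_forall_exists_not_undecided :
    IsClopen A ↔ ∀ f, ∃ n, ¬Undecided A (seqPrefix f n) := by
  simp only [IsClopen, ← isOpen_compl_iff, isOpen_iff_forall_mem_exists_not_undecided,
    undecided_compl]
  refine ⟨fun ⟨hcompl, hA⟩ f => ?_, fun h => ⟨fun f _ => h f, fun f _ => h f⟩⟩
  by_cases hf : f ∈ A
  exacts [hA f hf, hcompl f hf]

end Topology

section Tree

variable (A : Set (ℕ → X))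

def UndecidedChild (t s : List X) : Prop :=
  (∃ x : X, t = s ++ [x]) ∧ Undecided A s ∧ Undecided A t

variable {A}

theorem exists_forall_undecided_seqPrefix_of_chain {s : ℕ → List X}
    (hs : ∀ n, UndecidedChild A (s (n + 1)) (s n)) :
    ∃ F : ℕ → X, ∀ n, Undecided A (seqPrefix F n) := by
  have hprefix : ∀ n, s n <+: s (n + 1) := fun n => by
    obtain ⟨x, hx⟩ := (hs n).1
    exact hx ▸ List.prefix_append _ _
  have hlen : ∀ n, n ≤ (s n).length := by
    intro n
    induction n with
    | zero => exact Nat.zero_le _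
    | succ n ih =>
      obtain ⟨x, hx⟩ := (hs n).1
      simpa [hx] using ih
  obtain ⟨F, hF⟩ := exists_extendsPos_of_prefix_chain hprefix hlen
  refine ⟨F, fun n => (hs n).2.1.mono fun g hg => extendsPos_seqPrefix_iff.2 fun i hi => ?_⟩
  have hi' : i < (s n).length := hi.trans_le (hlen n)
  rw [hg i hi', hF n i hi']

theorem wellFounded_undecidedChild_iff :
    WellFounded (UndecidedChild A) ↔ ∀ f, ∃ n, ¬Undecided A (seqPrefix f n) := by
  rw [wellFounded_iff_isEmpty_descending_chain, isEmpty_subtype]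
  constructor
  · intro h f
    by_contra! hf
    exact h (seqPrefix f) fun n => ⟨⟨f n, seqPrefix_succ f n⟩, hf n, hf (n + 1)⟩
  · intro h s hs
    obtain ⟨F, hF⟩ := exists_forall_undecided_seqPrefix_of_chain hs
    obtain ⟨n, hn⟩ := h F
    exact hn (hF n)

end Tree

end

/-- For `X` discrete and `ℕ → X` with the product topology, a set
`A ⊆ (ℕ → X)` is clopen iff the one-step-extension relation on positions
undecided for `A` is well-founded: a game is clopen exactly when its game
tree of undecided positions is well-founded. -/
theorem isClopen_iff_undecided_tree_wellFounded {X : Type*} [TopologicalSpace X]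
    [DiscreteTopology X] (A : Set (ℕ → X)) :
    IsClopen A ↔ WellFounded (fun t s : List X =>
      (∃ x : X, t = s ++ [x]) ∧ Undecided A s ∧ Undecided A t) :=
  isClopen_iff_forall_exists_not_undecided.trans wellFounded_undecidedChild_iff.symm
end

section
/- Let X be a type with the discrete topology, give ℕ → X the product topology, and let A ⊆ (ℕ → X) be open. If τ : List X → X is a winning strategy for player I (the open player) in the game with payoff A, then the tree of positions consistent with τ that are not yet won is well-founded: the relation on List X given by 't is related below s iff t = s ++ [x] for some x ∈ X, both s and t are consistent with τ, and both s and t have some extension lying outside A' is a well-founded relation. -/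
/-- A position `s = [a₀, …, a_{n−1}]` is consistent with a strategy
`τ : List X → X` for player I if `a_{2k} = τ [a₀, …, a_{2k−1}]` whenever
`2k < n`. -/
def ConsistentWithI {X : Type*} (τ : List X → X) (s : List X) : Prop :=
  ∀ (k : ℕ) (h : 2 * k < s.length), s.get ⟨2 * k, h⟩ = τ (s.take (2 * k))

open PiNat

section Positions

variable {X : Type*} {τ : List X → X} {f : ℕ → X} {s : List X}

theorem ExtendsPos.map_range_eq_take (hf : ExtendsPos f s) {n : ℕ} (hn : n ≤ s.length) :
    (List.range n).map f = s.take n :=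
  List.ext_getElem (by simp only [List.length_map, List.length_range, List.length_take]; omega)
    fun i hi _ => by
      simp only [List.length_map, List.length_range] at hi
      simp [hf i (by omega)]

theorem ConsistentWithI.apply_eq (hs : ConsistentWithI τ s) (hf : ExtendsPos f s) {k : ℕ}
    (hk : 2 * k < s.length) : f (2 * k) = τ ((List.range (2 * k)).map f) := by
  rw [hf _ hk, hs k hk, hf.map_range_eq_take hk.le]

end Positions

section AppendChain

variable {X : Type*} {s : ℕ → List X}

theorem length_eq_of_forall_eq_append_singleton (hs : ∀ n, ∃ x, s (n + 1) = s n ++ [x])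
    (n : ℕ) : (s n).length = (s 0).length + n := by
  induction n with
  | zero => rfl
  | succ n ih =>
    obtain ⟨x, hx⟩ := hs n
    simp [hx, ih, Nat.add_assoc]

theorem isPrefix_of_forall_eq_append_singleton (hs : ∀ n, ∃ x, s (n + 1) = s n ++ [x])
    {m n : ℕ} (hmn : m ≤ n) : s m <+: s n :=
  Nat.rel_of_forall_rel_succ_of_le (· <+: ·)
    (fun n => (hs n).elim fun x hx => ⟨[x], hx.symm⟩) hmn

theorem exists_extendsPos_of_forall_eq_append_singleton
    (hs : ∀ n, ∃ x, s (n + 1) = s n ++ [x]) : ∃ f : ℕ → X, ∀ n, ExtendsPos f (s n) := by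
  have hlt (i : ℕ) : i < (s (i + 1)).length := by
    rw [length_eq_of_forall_eq_append_singleton hs]; omega
  refine ⟨fun i => (s (i + 1))[i]'(hlt i), fun n i hi => ?_⟩
  rcases le_total n (i + 1) with h | h
  · exact ((isPrefix_of_forall_eq_append_singleton hs h).getElem hi).symm
  · exact (isPrefix_of_forall_eq_append_singleton hs h).getElem (hlt i)

end AppendChain

theorem exists_cylinder_subset_of_isOpen {X : Type*} [TopologicalSpace X] [DiscreteTopology X]
    {A : Set (ℕ → X)} (hA : IsOpen A) {f : ℕ → X} (hf : f ∈ A) : ∃ n, cylinder f n ⊆ A := by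
  obtain ⟨_, ⟨g, n, rfl⟩, hfg, hsub⟩ :=
    (isTopologicalBasis_cylinders fun _ => X).exists_subset_of_mem_open hf hA
  exact ⟨n, mem_cylinder_iff_eq.1 hfg ▸ hsub⟩

/-- If `A` is open and `τ` is a winning strategy for player I (the open player)
in the game with payoff `A`, then the tree of positions consistent with `τ`
that are not yet won for player I is well-founded. -/
theorem winning_open_strategy_tree_wellFounded {X : Type*} [TopologicalSpace X]
    [DiscreteTopology X] (A : Set (ℕ → X)) (hA : IsOpen A)
    (τ : List X → X)
    (hτ : ∀ f : ℕ → X, (∀ k : ℕ, f (2 * k) = τ ((List.range (2 * k)).map f)) → f ∈ A) :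
    WellFounded (fun t s : List X =>
      (∃ x : X, t = s ++ [x]) ∧ ConsistentWithI τ s ∧ ConsistentWithI τ t ∧
        (∃ f : ℕ → X, ExtendsPos f s ∧ f ∉ A) ∧
        (∃ f : ℕ → X, ExtendsPos f t ∧ f ∉ A)) := by
  refine wellFounded_iff_isEmpty_descending_chain.2 ⟨fun ⟨s, hs⟩ => ?_⟩
  have hstep (n : ℕ) : ∃ x, s (n + 1) = s n ++ [x] := (hs n).1
  have hlen (n : ℕ) : n ≤ (s n).length := by
    rw [length_eq_of_forall_eq_append_singleton hstep]; omega
  obtain ⟨f, hf⟩ := exists_extendsPos_of_forall_eq_append_singleton hstep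
  have hfA : f ∈ A := hτ f fun k => (hs (2 * k)).2.2.1.apply_eq (hf _) (hlen (2 * k + 1))
  obtain ⟨n, hn⟩ := exists_cylinder_subset_of_isOpen hA hfA
  obtain ⟨g, hg, hgA⟩ := (hs n).2.2.2.1
  have hgf (i : ℕ) (hi : i < n) : g i = f i :=
    (hg i (hi.trans_le (hlen n))).trans (hf n i (hi.trans_le (hlen n))).symm
  exact hgA (hn hgf)
end

section
/- Let P be a preorder that is countably strategically closed, i.e., player II has a winning strategy in the strategic closure game on P. Then for every countable family D : ℕ → Set P of dense open subsets of P and every p ∈ P, there exists q ≤ p with q ∈ D n for all n ∈ ℕ; that is, the intersection of countably many dense open subsets of P is dense. -/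
/-!
Player I plays the strategy "start at `p`, and at move `2k + 2` step into the `k`-th dense set
below the previous condition", against II's winning strategy. The resulting play is descending,
so it has a lower bound `q`; as the sets are open, `q` lies in every one of them.
-/

namespace StrategicClosureGame

variable {P : Type*}

def position (τ σ : List P → P) : ℕ → List P
  | 0 => []
  | n + 1 =>
    position τ σ n ++ [if Even n then τ (position τ σ n) else σ (position τ σ n)]

def play (τ σ : List P → P) (n : ℕ) : P :=
  if Even n then τ (position τ σ n) else σ (position τ σ n)

/-- Player I opens with `p` and, at move `2k + 2`, plays `c k` of the last condition. -/
def strategyOfChoices (p : P) (c : ℕ → P → P) (l : List P) : P :=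
  match l.getLast? with
  | none => p
  | some x => c (l.length / 2 - 1) x

variable (τ σ : List P → P)

theorem position_succ (n : ℕ) : position τ σ (n + 1) = position τ σ n ++ [play τ σ n] := rfl

theorem position_eq_map_range (n : ℕ) : position τ σ n = (List.range n).map (play τ σ) := by
  induction n with
  | zero => rfl
  | succ n ih => rw [position_succ, List.range_succ, List.map_append, ih, List.map_singleton]

theorem length_position (n : ℕ) : (position τ σ n).length = n := by
  simp [position_eq_map_range]

theorem getLast?_position_succ (n : ℕ) :
    (position τ σ (n + 1)).getLast? = some (play τ σ n) := by
  rw [position_succ, List.getLast?_concat]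

theorem play_of_even {n : ℕ} (hn : Even n) : play τ σ n = τ (position τ σ n) := if_pos hn

theorem play_of_odd {n : ℕ} (hn : Odd n) : play τ σ n = σ (position τ σ n) :=
  if_neg (Nat.not_even_iff_odd.mpr hn)

theorem play_two_mul_add_one (k : ℕ) :
    play τ σ (2 * k + 1) = σ ((List.range (2 * k + 1)).map (play τ σ)) := by
  rw [play_of_odd τ σ (odd_two_mul_add_one k), position_eq_map_range]

theorem play_strategyOfChoices_zero (p : P) (c : ℕ → P → P) :
    play (strategyOfChoices p c) σ 0 = p := rfl

theorem play_strategyOfChoices_two_mul_add_two (p : P) (c : ℕ → P → P) (k : ℕ) :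
    play (strategyOfChoices p c) σ (2 * k + 2) =
      c k (play (strategyOfChoices p c) σ (2 * k + 1)) := by
  rw [play_of_even _ σ ⟨k + 1, by ring⟩]
  simp only [strategyOfChoices, getLast?_position_succ, length_position]
  congr 1
  omega

variable [Preorder P] {τ σ}

theorem strategyOfChoices_le {p : P} {c : ℕ → P → P} (hc : ∀ n x, c n x ≤ x) (l : List P) (x : P)
    (hx : l.getLast? = some x) : strategyOfChoices p c l ≤ x := by
  simp only [strategyOfChoices, hx]
  exact hc _ x

theorem isChain_position_iff (n : ℕ) :
    List.IsChain (fun a b => b ≤ a) (position τ σ (n + 1)) ↔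
      ∀ m < n, play τ σ (m + 1) ≤ play τ σ m := by
  rw [position_eq_map_range, List.isChain_map, List.isChain_range_succ]

theorem play_succ_le
    (hτ : ∀ l : List P, ∀ x : P, l.getLast? = some x → τ l ≤ x)
    (hσ : ∀ l : List P, List.IsChain (fun a b => b ≤ a) l → Odd l.length →
      ∀ x : P, l.getLast? = some x → σ l ≤ x) (n : ℕ) :
    play τ σ (n + 1) ≤ play τ σ n := by
  induction n using Nat.strong_induction_on with
  | _ n ih =>
    rcases Nat.even_or_odd (n + 1) with hev | hodd
    · rw [play_of_even τ σ hev]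
      exact hτ _ _ (getLast?_position_succ τ σ n)
    · rw [play_of_odd τ σ hodd]
      refine hσ _ ((isChain_position_iff n).mpr ih) ?_ _ (getLast?_position_succ τ σ n)
      rwa [length_position]

end StrategicClosureGame

open StrategicClosureGame

/-- If a preorder `P` is countably strategically closed — player II has a winning
strategy `σ` in the strategic closure game, i.e. `σ` answers any legal position
`[p₀, …, p_{2k}]` with a condition below `p_{2k}`, and every infinite descending
sequence of conditions according with `σ` has a lower bound in `P` — then for any
countable family of dense open subsets of `P` and any `p ∈ P` there is `q ≤ p`
lying in all of them: the intersection of countably many dense open sets is dense. -/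
theorem countably_strategically_closed_dense_open_intersection {P : Type*} [Preorder P]
    (h : ∃ σ : List P → P,
      (∀ l : List P, List.Chain' (fun a b => b ≤ a) l → Odd l.length →
        ∀ x : P, l.getLast? = some x → σ l ≤ x) ∧
      (∀ p : ℕ → P, (∀ n : ℕ, p (n + 1) ≤ p n) →
        (∀ k : ℕ, p (2 * k + 1) = σ ((List.range (2 * k + 1)).map p)) →
        ∃ q : P, ∀ n : ℕ, q ≤ p n))
    (D : ℕ → Set P)
    (hDdense : ∀ n : ℕ, ∀ p : P, ∃ q ≤ p, q ∈ D n)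
    (hDopen : ∀ n : ℕ, ∀ p ∈ D n, ∀ q : P, q ≤ p → q ∈ D n)
    (p : P) :
    ∃ q ≤ p, ∀ n : ℕ, q ∈ D n := by
  obtain ⟨σ, hσ, hwin⟩ := h
  choose c hc_le hc_mem using hDdense
  set τ := strategyOfChoices p c
  obtain ⟨q, hq⟩ :=
    hwin (play τ σ) (play_succ_le (strategyOfChoices_le hc_le) hσ) (play_two_mul_add_one τ σ)
  refine ⟨q, play_strategyOfChoices_zero σ p c ▸ hq 0, fun n => ?_⟩
  have hmem : play τ σ (2 * n + 2) ∈ D n := by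
    rw [play_strategyOfChoices_two_mul_add_two]
    exact hc_mem n _
  exact hDopen n _ hmem q (hq (2 * n + 2))
end
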